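/- Consider one inner loop of SARAH with batch size b = 1 and each f_i L-smooth. Then for every t ≥ 1, E[||∇P(w_t) − v_t||²] ≤ L²η² · Σ_{j=1}^{t} E[||v_{j−1}||²]. -/

import Mathlib

/-!
Write `eₜ = ∇P(wₜ) - vₜ`. The iterate `wₜ₊₁ = wₜ - η vₜ` depends only on the indices drawn
before step `t + 1`, so with `Xᵢ = ∇fᵢ(wₜ₊₁) - ∇fᵢ(wₜ)` and `i` the fresh index,
`eₜ₊₁ = eₜ + (𝔼X - Xᵢ)` where the second term is centred given the past. Averaging over `i`
first gives `𝔼ᵢ‖eₜ₊₁‖² ≤ ‖eₜ‖² + 𝔼ᵢ‖Xᵢ‖² ≤ ‖eₜ‖² + L²η²‖vₜ‖²`, and since `e₀ = 0` the bound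
follows by induction after taking full expectations.
-/

open scoped BigOperators

noncomputable section

/-- Vectors in `ℝ^d`. -/
abbrev Vec (d : ℕ) := EuclideanSpace ℝ (Fin d)

/-- Expectation (uniform average) over a finite sample space. -/
def expec {Ω : Type*} [Fintype Ω] (F : Ω → ℝ) : ℝ :=
  (Fintype.card Ω : ℝ)⁻¹ * ∑ ω, F ω

/-- The SARAH-IN state `(w_t, v_t)` with batch size `b = 1`, given the sequence of sampled
indices `idx` (where `idx t` is the index used to form `v_t`, for `t ≥ 1`). -/
def sarah1 {d n : ℕ} (f : Fin n → Vec d → ℝ) (w0 : Vec d) (η : ℝ)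
    (idx : ℕ → Fin n) : ℕ → Vec d × Vec d
  | 0 => (w0, (n : ℝ)⁻¹ • ∑ i, gradient (f i) w0)
  | t + 1 =>
    let p := sarah1 f w0 η idx t
    let w' := p.1 - η • p.2
    (w', gradient (f (idx (t + 1))) w' - gradient (f (idx (t + 1))) p.1 + p.2)

/-- Extend a finite sequence of sampled indices to all of `ℕ`. -/
def pad1 {n T : ℕ} (ω : Fin (T + 1) → Fin n) : ℕ → Fin n :=
  fun t => if h : t < T + 1 then ω ⟨t, h⟩ else ω 0

section Expectation

variable {Ω : Type*} [Fintype Ω]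

lemma expec_mono {F G : Ω → ℝ} (h : ∀ ω, F ω ≤ G ω) : expec F ≤ expec G :=
  mul_le_mul_of_nonneg_left (Finset.sum_le_sum fun ω _ => h ω) (by positivity)

lemma expec_add (F G : Ω → ℝ) : expec (fun ω => F ω + G ω) = expec F + expec G := by
  simp only [expec, Finset.sum_add_distrib, mul_add]

lemma expec_const_mul (c : ℝ) (F : Ω → ℝ) : expec (fun ω => c * F ω) = c * expec F := by
  simp only [expec, ← Finset.mul_sum]
  ring

lemma expec_le_of_forall_le {F : Ω → ℝ} {c : ℝ} (hc : 0 ≤ c) (h : ∀ ω, F ω ≤ c) :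
    expec F ≤ c := by
  rcases isEmpty_or_nonempty Ω with hΩ | hΩ
  · simpa [expec] using hc
  calc expec F ≤ expec fun _ : Ω => c := expec_mono h
    _ = c := by simp [expec]

lemma expec_eq_expec_update {ι α : Type*} [Fintype ι] [DecidableEq ι] [Fintype α]
    (k : ι) (F : (ι → α) → ℝ) :
    expec F = expec fun ω => expec fun a => F (Function.update ω k a) := by
  rcases isEmpty_or_nonempty α with hα | hα
  · have : IsEmpty (ι → α) := ⟨fun ω => hα.false (ω k)⟩
    simp [expec]
  have hinv : Function.Involutive fun p : (ι → α) × α => (Function.update p.1 k p.2, p.1 k) :=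
    fun p => by simp
  have hsum : ∑ ω, ∑ a, F (Function.update ω k a) = Fintype.card α * ∑ ω, F ω := by
    rw [← Fintype.sum_prod_type', Fintype.sum_bijective _ hinv.bijective
      (fun p => F (Function.update p.1 k p.2)) (fun p => F p.1) fun _ => rfl,
      Fintype.sum_prod_type, Finset.mul_sum]
    simp
  have hcard : (Fintype.card α : ℝ) ≠ 0 := by positivity
  simp only [expec, ← Finset.mul_sum, hsum]
  field_simp

end Expectation

section InnerProduct

variable {E : Type*} [NormedAddCommGroup E] [InnerProductSpace ℝ E]

lemma sum_norm_add_sq_of_sum_eq_zero {ι : Type*} [Fintype ι] (A : E) {Y : ι → E}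
    (hY : ∑ i, Y i = 0) :
    ∑ i, ‖A + Y i‖ ^ 2 = Fintype.card ι * ‖A‖ ^ 2 + ∑ i, ‖Y i‖ ^ 2 := by
  simp only [norm_add_sq_real, Finset.sum_add_distrib, ← Finset.mul_sum, ← inner_sum, hY,
    inner_zero_right, Finset.sum_const, Finset.card_univ, nsmul_eq_mul]
  ring

lemma expec_norm_add_mean_sub_sq_le {ι : Type*} [Fintype ι] (A : E) (X : ι → E) :
    expec (fun i => ‖A + ((Fintype.card ι : ℝ)⁻¹ • ∑ j, X j - X i)‖ ^ 2)
      ≤ ‖A‖ ^ 2 + expec (fun i => ‖X i‖ ^ 2) := by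
  rcases isEmpty_or_nonempty ι with hι | hι
  · simp [expec]
  set N : ℝ := (Fintype.card ι : ℝ)
  set B : E := N⁻¹ • ∑ j, X j
  have hN : N ≠ 0 := by positivity
  have hXB : ∑ i, X i = N • B := by simp only [B, smul_smul, mul_inv_cancel₀ hN, one_smul]
  have hcentered : ∑ i, (B - X i) = 0 := by
    rw [Finset.sum_sub_distrib, hXB, Finset.sum_const, Finset.card_univ, ← Nat.cast_smul_eq_nsmul ℝ,
      sub_self]
  have hvariance : ∑ i, ‖B - X i‖ ^ 2 = ∑ i, ‖X i‖ ^ 2 - N * ‖B‖ ^ 2 := by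
    simp only [norm_sub_sq_real, Finset.sum_add_distrib, Finset.sum_sub_distrib, ← Finset.mul_sum,
      ← inner_sum, hXB, real_inner_smul_right, real_inner_self_eq_norm_sq, Finset.sum_const,
      Finset.card_univ, nsmul_eq_mul]
    ring
  have hB : 0 ≤ N * ‖B‖ ^ 2 := by positivity
  simp only [expec, sum_norm_add_sq_of_sum_eq_zero A hcentered, hvariance]
  rw [← sub_nonneg]
  field_simp
  linarith

lemma gradient_const_mul_sum [CompleteSpace E] {ι : Type*} (s : Finset ι) (c : ℝ)
    {f : ι → E → ℝ} (hf : ∀ i ∈ s, Differentiable ℝ (f i)) (w : E) :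
    gradient (fun w => c * ∑ i ∈ s, f i w) w = c • ∑ i ∈ s, gradient (f i) w := by
  refine HasGradientAt.gradient ?_
  rw [hasGradientAt_iff_hasFDerivAt, map_smul, map_sum]
  simp only [gradient, LinearIsometryEquiv.apply_symm_apply]
  exact (HasFDerivAt.fun_sum fun i hi => (hf i hi w).hasFDerivAt).const_mul c

end InnerProduct

section Sarah

variable {E ι : Type*} [NormedAddCommGroup E] [InnerProductSpace ℝ E] [CompleteSpace E]

def sarahStep (f : ι → E → ℝ) (η : ℝ) (i : ι) (p : E × E) : E × E :=
  (p.1 - η • p.2, gradient (f i) (p.1 - η • p.2) - gradient (f i) p.1 + p.2)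

lemma norm_gradient_sub_gradient_sq_le {g : E → ℝ} {L : ℝ}
    (hg : ∀ w w', ‖gradient g w - gradient g w'‖ ≤ L * ‖w - w'‖) (η : ℝ) (w v : E) :
    ‖gradient g (w - η • v) - gradient g w‖ ^ 2 ≤ L ^ 2 * η ^ 2 * ‖v‖ ^ 2 := by
  have h := hg (w - η • v) w
  rw [sub_sub_cancel_left, norm_neg, norm_smul, Real.norm_eq_abs] at h
  calc _ ≤ (L * (|η| * ‖v‖)) ^ 2 := pow_le_pow_left₀ (norm_nonneg _) h 2
    _ = L ^ 2 * η ^ 2 * ‖v‖ ^ 2 := by rw [mul_pow, mul_pow, sq_abs, mul_assoc]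

lemma expec_sarahStep_error_le [Fintype ι] {f : ι → E → ℝ} {P : E → ℝ} {L : ℝ}
    (hgrad : ∀ w, gradient P w = (Fintype.card ι : ℝ)⁻¹ • ∑ i, gradient (f i) w)
    (hsmooth : ∀ i w w', ‖gradient (f i) w - gradient (f i) w'‖ ≤ L * ‖w - w'‖)
    (η : ℝ) (p : E × E) :
    expec (fun i => ‖gradient P (sarahStep f η i p).1 - (sarahStep f η i p).2‖ ^ 2)
      ≤ ‖gradient P p.1 - p.2‖ ^ 2 + L ^ 2 * η ^ 2 * ‖p.2‖ ^ 2 := by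
  set w' := p.1 - η • p.2
  set X : ι → E := fun i => gradient (f i) w' - gradient (f i) p.1
  have hmean : (Fintype.card ι : ℝ)⁻¹ • ∑ i, X i = gradient P w' - gradient P p.1 := by
    simp only [X, hgrad, Finset.sum_sub_distrib, smul_sub]
  have herror : ∀ i, gradient P (sarahStep f η i p).1 - (sarahStep f η i p).2
      = (gradient P p.1 - p.2) + ((Fintype.card ι : ℝ)⁻¹ • ∑ j, X j - X i) := by
    intro i
    rw [hmean]
    simp only [sarahStep, X, w']
    abel
  simp only [herror]
  refine (expec_norm_add_mean_sub_sq_le _ X).trans (add_le_add_right ?_ _)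
  exact expec_le_of_forall_le (by positivity)
    fun i => norm_gradient_sub_gradient_sq_le (hsmooth i) η p.1 p.2

end Sarah

section Trajectory

variable {d n : ℕ} (f : Fin n → Vec d → ℝ) (w0 : Vec d) (η : ℝ)

lemma sarah1_succ (idx : ℕ → Fin n) (s : ℕ) :
    sarah1 f w0 η idx (s + 1) = sarahStep f η (idx (s + 1)) (sarah1 f w0 η idx s) := rfl

lemma sarah1_congr {idx idx' : ℕ → Fin n} {s : ℕ} (h : ∀ j, 1 ≤ j → j ≤ s → idx j = idx' j) :
    sarah1 f w0 η idx s = sarah1 f w0 η idx' s := by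
  induction s with
  | zero => rfl
  | succ s ih =>
    rw [sarah1_succ, sarah1_succ, ih fun j h1 h2 => h j h1 (by omega), h (s + 1) (by omega) le_rfl]

lemma sarah1_pad1_update_of_lt {T : ℕ} (ω : Fin (T + 1) → Fin n) (k : Fin (T + 1)) (i : Fin n)
    {s : ℕ} (hs : s < k) :
    sarah1 f w0 η (pad1 (Function.update ω k i)) s = sarah1 f w0 η (pad1 ω) s := by
  refine sarah1_congr f w0 η fun j _ hj => ?_
  have hjT : j < T + 1 := by omega
  simp only [pad1, dif_pos hjT]
  have hjk : (⟨j, hjT⟩ : Fin (T + 1)) ≠ k := Fin.ne_of_val_ne (by dsimp only; omega)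
  exact Function.update_of_ne hjk i ω

lemma sarah1_pad1_update_succ {T : ℕ} (ω : Fin (T + 1) → Fin n) {s : ℕ} (hs : s + 1 < T + 1)
    (i : Fin n) :
    sarah1 f w0 η (pad1 (Function.update ω ⟨s + 1, hs⟩ i)) (s + 1)
      = sarahStep f η i (sarah1 f w0 η (pad1 ω) s) := by
  rw [sarah1_succ, sarah1_pad1_update_of_lt f w0 η ω _ i (Nat.lt_succ_self s)]
  simp [pad1, hs]

variable {f η} {P : Vec d → ℝ} {L : ℝ}

lemma expec_sarah1_error_succ_le
    (hgrad : ∀ w, gradient P w = (n : ℝ)⁻¹ • ∑ i, gradient (f i) w)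
    (hsmooth : ∀ i w w', ‖gradient (f i) w - gradient (f i) w'‖ ≤ L * ‖w - w'‖)
    {T s : ℕ} (hs : s + 1 < T + 1) :
    expec (fun ω : Fin (T + 1) → Fin n =>
        ‖gradient P (sarah1 f w0 η (pad1 ω) (s + 1)).1 - (sarah1 f w0 η (pad1 ω) (s + 1)).2‖ ^ 2)
      ≤ expec (fun ω : Fin (T + 1) → Fin n =>
          ‖gradient P (sarah1 f w0 η (pad1 ω) s).1 - (sarah1 f w0 η (pad1 ω) s).2‖ ^ 2)
        + L ^ 2 * η ^ 2 * expec (fun ω : Fin (T + 1) → Fin n =>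
          ‖(sarah1 f w0 η (pad1 ω) s).2‖ ^ 2) := by
  rw [expec_eq_expec_update ⟨s + 1, hs⟩, ← expec_const_mul, ← expec_add]
  refine expec_mono fun ω => ?_
  simp only [sarah1_pad1_update_succ f w0 η ω hs]
  exact expec_sarahStep_error_le (by simpa using hgrad) hsmooth η _

lemma expec_sarah1_error_le
    (hgrad : ∀ w, gradient P w = (n : ℝ)⁻¹ • ∑ i, gradient (f i) w)
    (hsmooth : ∀ i w w', ‖gradient (f i) w - gradient (f i) w'‖ ≤ L * ‖w - w'‖)
    {T s : ℕ} (hs : s ≤ T) :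
    expec (fun ω : Fin (T + 1) → Fin n =>
        ‖gradient P (sarah1 f w0 η (pad1 ω) s).1 - (sarah1 f w0 η (pad1 ω) s).2‖ ^ 2)
      ≤ L ^ 2 * η ^ 2 * ∑ j ∈ Finset.Icc 1 s,
          expec (fun ω : Fin (T + 1) → Fin n => ‖(sarah1 f w0 η (pad1 ω) (j - 1)).2‖ ^ 2) := by
  induction s with
  | zero => simp [sarah1, hgrad, expec]
  | succ s ih =>
    rw [Finset.sum_Icc_succ_top (by omega), Nat.add_sub_cancel, mul_add]
    exact (expec_sarah1_error_succ_le w0 hgrad hsmooth (by omega)).trans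
      (add_le_add_left (ih (by omega)) _)

end Trajectory

theorem sarah_b1_variance_bound_general
    {d n : ℕ}
    (f : Fin n → Vec d → ℝ) (L : ℝ)
    (hdiff : ∀ i, Differentiable ℝ (f i))
    (hsmooth : ∀ i (w w' : Vec d),
      ‖gradient (f i) w - gradient (f i) w'‖ ≤ L * ‖w - w'‖)
    (P : Vec d → ℝ) (hP : P = fun w => (n : ℝ)⁻¹ * ∑ i, f i w)
    (w0 : Vec d) (η : ℝ) (t : ℕ) :
    expec (fun ω : Fin (t + 1) → Fin n =>
        ‖gradient P ((sarah1 f w0 η (pad1 ω) t).1)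
          - (sarah1 f w0 η (pad1 ω) t).2‖ ^ 2)
      ≤ L ^ 2 * η ^ 2 * ∑ j ∈ Finset.Icc 1 t,
          expec (fun ω : Fin (t + 1) → Fin n =>
            ‖(sarah1 f w0 η (pad1 ω) (j - 1)).2‖ ^ 2) := by
  have hgrad (w : Vec d) : gradient P w = (n : ℝ)⁻¹ • ∑ i, gradient (f i) w := by
    rw [hP]
    exact gradient_const_mul_sum _ _ (fun i _ => hdiff i) w
  exact expec_sarah1_error_le w0 hgrad hsmooth le_rfl

/-- For SARAH with batch size `b = 1`, uniformly sampled indices and `L`-smooth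
components, for every `t ≥ 1`:
`E‖∇P(w_t) − v_t‖² ≤ L²η² ∑_{j=1}^t E‖v_{j−1}‖²`. -/
theorem sarah_b1_variance_bound
    {d n : ℕ} (hn : 1 ≤ n)
    (f : Fin n → Vec d → ℝ) (L : ℝ) (hL : 0 < L)
    (hdiff : ∀ i, Differentiable ℝ (f i))
    (hsmooth : ∀ i (w w' : Vec d),
      ‖gradient (f i) w - gradient (f i) w'‖ ≤ L * ‖w - w'‖)
    (P : Vec d → ℝ) (hP : P = fun w => (n : ℝ)⁻¹ * ∑ i, f i w)
    (w0 : Vec d) (η : ℝ) (hη : 0 < η) (t : ℕ) (ht : 1 ≤ t) :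
    expec (fun ω : Fin (t + 1) → Fin n =>
        ‖gradient P ((sarah1 f w0 η (pad1 ω) t).1)
          - (sarah1 f w0 η (pad1 ω) t).2‖ ^ 2)
      ≤ L ^ 2 * η ^ 2 * ∑ j ∈ Finset.Icc 1 t,
          expec (fun ω : Fin (t + 1) → Fin n =>
            ‖(sarah1 f w0 η (pad1 ω) (j - 1)).2‖ ^ 2) :=
  sarah_b1_variance_bound_general f L hdiff hsmooth P hP w0 η t
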